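/- arXiv:2112.12452 — 2 statements merged into one kernel-verified Lean document; each statement's English description precedes it below -/
import Mathlib

section
/- Let V be a (2s+2)-dimensional F_q-vector space with a regulus R (set of q+1 pairwise complementary (s+1)-dimensional subspaces such that any 2-dimensional subspace meeting three members meets all). Then there exists a 2s-dimensional subspace T of V that intersects every member of R in a subspace of dimension exactly s. -/
/-!
Choose three members `σ₁, σ₂, σ₃` of the regulus and `s` independent vectors `x i + y i` of `σ₃`
with `x i ∈ σ₁`, `y i ∈ σ₂`. Each line `⟨x i, y i⟩` meets `σ₁`, `σ₂` and `σ₃`, so it is a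
transversal and meets every member `σ`. The lines are independent and span a `2s`-space `T`; a
nonzero vector of each line in `σ` gives `dim (T ∩ σ) ≥ s`, and equality holds because `T ∩ σ` and
`T ∩ σ'` are disjoint subspaces of `T` for another member `σ'`.
-/

open Function Module Submodule

theorem LinearIndependent.iSupIndep_span_image {R M ι κ : Type*} [Ring R] [AddCommGroup M]
    [Module R M] {v : ι → M} (hv : LinearIndependent R v) {S : κ → Set ι}
    (hS : Pairwise (Disjoint on S)) : iSupIndep fun k => span R (v '' S k) := by
  intro k
  simp only [← span_iUnion₂, ← Set.image_iUnion₂]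
  exact hv.disjoint_span_image (Set.disjoint_iUnion₂_right.2 fun j hjk => hS (Ne.symm hjk))

section DivisionRing

variable {K V : Type*} [DivisionRing K] [AddCommGroup V] [Module K V]

theorem Submodule.inf_ne_bot_of_mem {p q : Submodule K V} {v : V} (hp : v ∈ p) (hq : v ∈ q)
    (hv : v ≠ 0) : p ⊓ q ≠ ⊥ :=
  (Submodule.ne_bot_iff _).2 ⟨v, ⟨hp, hq⟩, hv⟩

theorem finrank_span_pair_of_disjoint {p q : Submodule K V} (hpq : Disjoint p q) {x y : V}
    (hx : x ∈ p) (hy : y ∈ q) (hx0 : x ≠ 0) (hy0 : y ≠ 0) : finrank K (span K {x, y}) = 2 := by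
  have hbot : K ∙ x ⊓ K ∙ y = ⊥ :=
    (hpq.mono ((span_singleton_le_iff_mem _ _).2 hx) ((span_singleton_le_iff_mem _ _).2 hy)).eq_bot
  have := finrank_sup_add_finrank_inf_eq (K ∙ x) (K ∙ y)
  rw [hbot, finrank_bot, finrank_span_singleton hx0, finrank_span_singleton hy0] at this
  rwa [span_insert]

theorem iSupIndep_span_pair {ι : Type*} {x y : ι → V}
    (h : LinearIndependent K (Sum.elim x y)) : iSupIndep fun i => span K {x i, y i} := by
  have := h.iSupIndep_span_image (S := fun i => {Sum.inl i, Sum.inr i}) fun i j hij => by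
    simp [onFun, Set.disjoint_left, hij]
  simpa [Set.image_pair] using this

variable [FiniteDimensional K V]

theorem card_le_finrank_inf_of_iSupIndep {ι : Type*} [Fintype ι] {L : ι → Submodule K V}
    (hL : iSupIndep L) {T W : Submodule K V} (hLT : ∀ i, L i ≤ T) (hW : ∀ i, L i ⊓ W ≠ ⊥) :
    Fintype.card ι ≤ finrank K (T ⊓ W : Submodule K V) := by
  choose w hw hw0 using fun i => (Submodule.ne_bot_iff _).1 (hW i)
  have hwL : LinearIndependent K w := hL.linearIndependent L (fun i => (hw i).1) hw0
  rw [← finrank_span_eq_card hwL]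
  refine Submodule.finrank_mono (span_le.2 ?_)
  rintro _ ⟨i, rfl⟩
  exact ⟨hLT i (hw i).1, (hw i).2⟩

theorem finrank_inf_add_finrank_inf_le {p q : Submodule K V} (hpq : Disjoint p q)
    (T : Submodule K V) :
    finrank K (T ⊓ p : Submodule K V) + finrank K (T ⊓ q : Submodule K V) ≤ finrank K T := by
  rw [← finrank_sup_add_finrank_inf_eq, (hpq.mono inf_le_right inf_le_right).eq_bot, finrank_bot,
    add_zero]
  exact Submodule.finrank_mono (sup_le inf_le_left inf_le_left)

theorem card_le_finrank_span_inf {ι : Type*} [Fintype ι] {x y : ι → V}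
    (hxy : LinearIndependent K (Sum.elim x y)) {W : Submodule K V}
    (hW : ∀ i, span K {x i, y i} ⊓ W ≠ ⊥) :
    Fintype.card ι ≤ finrank K (span K (Set.range (Sum.elim x y)) ⊓ W : Submodule K V) :=
  card_le_finrank_inf_of_iSupIndep (iSupIndep_span_pair hxy)
    (fun i => span_mono <|
      Set.pair_subset (Set.mem_range_self (Sum.inl i)) (Set.mem_range_self (Sum.inr i)))
    hW

theorem exists_transversal_frame {p q r : Submodule K V} (hpq : IsCompl p q)
    (hrp : Disjoint r p) (hrq : Disjoint r q) {n : ℕ} (hn : n ≤ finrank K r) :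
    ∃ x y : Fin n → V, LinearIndependent K (Sum.elim x y) ∧ LinearIndependent K (x + y) ∧
      ∀ i, x i ∈ p ∧ y i ∈ q ∧ x i + y i ∈ r := by
  set d : Fin n → V := fun i => finBasis K r (Fin.castLE hn i)
  have hd : LinearIndependent K d :=
    ((finBasis K r).linearIndependent.comp _ (Fin.castLE_injective hn)).map' _ r.ker_subtype
  have hdr : span K (Set.range d) ≤ r := span_le.2 (Set.range_subset_iff.2 fun i => by simp [d])
  have hx : LinearIndependent K (p.projection q hpq ∘ d) :=
    hd.map (by rw [ker_projection]; exact hrq.mono_left hdr)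
  have hy : LinearIndependent K (q.projection p hpq.symm ∘ d) :=
    hd.map (by rw [ker_projection]; exact hrp.mono_left hdr)
  have hsum : p.projection q hpq ∘ d + q.projection p hpq.symm ∘ d = d :=
    funext fun i => projection_add_projection_eq_self hpq (d i)
  refine ⟨_, _, hx.sum_type hy (hpq.disjoint.mono ?_ ?_), by rwa [hsum], fun i => ⟨?_, ?_, ?_⟩⟩
  · exact span_le.2 (Set.range_subset_iff.2 fun i => projection_apply_mem _ _)
  · exact span_le.2 (Set.range_subset_iff.2 fun i => projection_apply_mem _ _)
  · exact projection_apply_mem _ _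
  · exact projection_apply_mem _ _
  · rw [← Pi.add_apply, hsum]
    exact hdr (subset_span (Set.mem_range_self i))

end DivisionRing

/-- For any regulus R in a (2s+2)-dimensional F_q-vector space there exists a
2s-dimensional subspace intersecting every member of R in a subspace of dimension
exactly s. -/
theorem stmt_9 {q s : ℕ} {F V : Type*} [Field F] [Fintype F] (hq : Fintype.card F = q)
    [AddCommGroup V] [Module F V] [FiniteDimensional F V]
    (hV : finrank F V = 2 * s + 2)
    (R : Finset (Submodule F V)) (hR : R.card = q + 1)
    (hdim : ∀ σ ∈ R, finrank F σ = s + 1)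
    (hdisj : ∀ σ ∈ R, ∀ σ' ∈ R, σ ≠ σ' → σ ⊓ σ' = ⊥)
    (hreg : ∀ L : Submodule F V, finrank F L = 2 →
      (∃ σ₁ ∈ R, ∃ σ₂ ∈ R, ∃ σ₃ ∈ R, σ₁ ≠ σ₂ ∧ σ₁ ≠ σ₃ ∧ σ₂ ≠ σ₃ ∧
        L ⊓ σ₁ ≠ ⊥ ∧ L ⊓ σ₂ ≠ ⊥ ∧ L ⊓ σ₃ ≠ ⊥) →
      ∀ σ ∈ R, L ⊓ σ ≠ ⊥) :
    ∃ T : Submodule F V, finrank F T = 2 * s ∧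
      ∀ σ ∈ R, finrank F (T ⊓ σ : Submodule F V) = s := by
  have hdisj' : ∀ σ ∈ R, ∀ σ' ∈ R, σ ≠ σ' → Disjoint σ σ' := fun σ hσ σ' hσ' h =>
    disjoint_iff.2 (hdisj σ hσ σ' hσ' h)
  have hq2 : 1 < q := hq ▸ Fintype.one_lt_card
  obtain ⟨σ₁, hσ₁, σ₂, hσ₂, σ₃, hσ₃, h12, h13, h23⟩ := Finset.two_lt_card.1 (by omega : 2 < R.card)
  have h12c : IsCompl σ₁ σ₂ :=
    (isCompl_iff_disjoint _ _ (by rw [hV, hdim _ hσ₁, hdim _ hσ₂]; omega)).2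
      (hdisj' _ hσ₁ _ hσ₂ h12)
  obtain ⟨x, y, hxy, hd, hmem⟩ := exists_transversal_frame h12c (hdisj' _ hσ₃ _ hσ₁ h13.symm)
    (hdisj' _ hσ₃ _ hσ₂ h23.symm) (n := s) (by rw [hdim _ hσ₃]; omega)
  have hx0 i : x i ≠ 0 := hxy.ne_zero (Sum.inl i)
  have hy0 i : y i ≠ 0 := hxy.ne_zero (Sum.inr i)
  have hxL i : x i ∈ span F {x i, y i} := subset_span (by simp)
  have hyL i : y i ∈ span F {x i, y i} := subset_span (by simp)
  set T := span F (Set.range (Sum.elim x y))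
  have hlower : ∀ σ ∈ R, s ≤ finrank F (T ⊓ σ : Submodule F V) := fun σ hσ => by
    simpa using card_le_finrank_span_inf hxy fun i => hreg _
      (finrank_span_pair_of_disjoint h12c.disjoint (hmem i).1 (hmem i).2.1 (hx0 i) (hy0 i))
      ⟨σ₁, hσ₁, σ₂, hσ₂, σ₃, hσ₃, h12, h13, h23, inf_ne_bot_of_mem (hxL i) (hmem i).1 (hx0 i),
        inf_ne_bot_of_mem (hyL i) (hmem i).2.1 (hy0 i),
        inf_ne_bot_of_mem (add_mem (hxL i) (hyL i)) (hmem i).2.2 (hd.ne_zero i)⟩ σ hσ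
  have hT : finrank F T = 2 * s := by simp [T, finrank_span_eq_card hxy, two_mul]
  refine ⟨T, hT, fun σ hσ => le_antisymm ?_ (hlower σ hσ)⟩
  obtain ⟨σ', hσ', hne⟩ := R.exists_mem_ne (by omega) σ
  have hsplit := finrank_inf_add_finrank_inf_le (hdisj' σ hσ σ' hσ' hne.symm) T
  have hlower' := hlower σ' hσ'
  omega
end

section
/- Let V be a finite-dimensional vector space over a field and let S be a family of t-dimensional subspaces such that any two distinct members intersect in a subspace of dimension exactly t-1. Then either all members of S are contained in a common (t+1)-dimensional subspace, or all members of S contain a common (t-1)-dimensional subspace. -/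
/-!
Fix two distinct members τ₀, τ₁, with W = τ₀ ⊓ τ₁ of dimension t - 1 and M = τ₀ ⊔ τ₁ of
dimension t + 1. Any other member τ meets τ₀ and τ₁ in hyperplanes of τ: if these coincide they
equal W, so W ≤ τ; otherwise they span τ, so τ ≤ M. If some member τ' escapes M, then
τ' ⊓ M = W, and every member τ ≤ M satisfies τ ⊓ τ' ≤ W, hence τ ⊓ τ' = W and again W ≤ τ.
-/

open Module

namespace Submodule

variable {F V : Type*} [Field F] [AddCommGroup V] [Module F V]

theorem exists_le_finrank_eq (p : Submodule F V) {n : ℕ} (hn : n ≤ finrank F p) :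
    ∃ W : Submodule F V, W ≤ p ∧ finrank F W = n := by
  obtain ⟨f, hf⟩ := exists_linearIndependent_of_le_finrank (R := F) (M := p) hn
  refine ⟨span F (Set.range (p.subtype ∘ f)), span_le.2 ?_, ?_⟩
  · rintro _ ⟨i, rfl⟩
    exact (f i).2
  · rw [finrank_span_eq_card (hf.map' p.subtype p.ker_subtype), Fintype.card_fin]

variable [FiniteDimensional F V]

theorem sup_eq_of_ne_of_finrank_add_one {A B τ : Submodule F V} (hA : A ≤ τ) (hB : B ≤ τ)
    (hAB : A ≠ B) (hAτ : finrank F A + 1 = finrank F τ) (hBA : finrank F B = finrank F A) :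
    A ⊔ B = τ := by
  have hlt : A < A ⊔ B := by
    refine lt_of_le_of_ne le_sup_left fun h => hAB ?_
    exact (eq_of_le_of_finrank_eq (h ▸ le_sup_right : B ≤ A) hBA).symm
  have := finrank_lt_finrank_of_lt hlt
  exact eq_of_le_of_finrank_le (sup_le hA hB) (by omega)

theorem inf_eq_of_not_le {W τ M : Submodule F V} (hWτ : W ≤ τ) (hWM : W ≤ M) (hτM : ¬τ ≤ M)
    (hW : finrank F W + 1 = finrank F τ) : τ ⊓ M = W := by
  have hlt : τ ⊓ M < τ := lt_of_le_of_ne inf_le_left fun h => hτM (h ▸ inf_le_right)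
  have := finrank_lt_finrank_of_lt hlt
  exact (eq_of_le_of_finrank_le (le_inf hWτ hWM) (by omega)).symm

end Submodule

open Submodule

section PairwiseAdjacent

variable {F V : Type*} [Field F] [AddCommGroup V] [Module F V] [FiniteDimensional F V]
  {t : ℕ} {S : Set (Submodule F V)}
  (hdim : ∀ τ ∈ S, finrank F τ = t)
  (hpair : ∀ τ₁ ∈ S, ∀ τ₂ ∈ S, τ₁ ≠ τ₂ → finrank F (τ₁ ⊓ τ₂ : Submodule F V) = t - 1)
include hdim hpair

theorem le_sup_or_inf_le_of_pairwise_adjacent (ht : 0 < t) {τ₀ τ₁ : Submodule F V}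
    (h₀ : τ₀ ∈ S) (h₁ : τ₁ ∈ S) (h₀₁ : τ₀ ≠ τ₁) ⦃τ : Submodule F V⦄ (hτ : τ ∈ S) :
    τ ≤ τ₀ ⊔ τ₁ ∨ τ₀ ⊓ τ₁ ≤ τ := by
  rcases eq_or_ne τ τ₀ with rfl | hτ₀
  · exact Or.inl le_sup_left
  rcases eq_or_ne τ τ₁ with rfl | hτ₁
  · exact Or.inl le_sup_right
  have hA := hpair τ hτ τ₀ h₀ hτ₀
  have hB := hpair τ hτ τ₁ h₁ hτ₁
  rcases eq_or_ne (τ ⊓ τ₀) (τ ⊓ τ₁) with hAB | hAB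
  · right
    have hle : τ ⊓ τ₀ ≤ τ₀ ⊓ τ₁ := le_inf inf_le_right (hAB ▸ inf_le_right)
    have hW := hpair τ₀ h₀ τ₁ h₁ h₀₁
    exact eq_of_le_of_finrank_eq hle (by omega) ▸ inf_le_left
  · left
    have hspan := sup_eq_of_ne_of_finrank_add_one inf_le_left inf_le_left hAB
      (by rw [hA, hdim τ hτ]; omega) (by rw [hA, hB])
    exact hspan ▸ sup_le_sup inf_le_right inf_le_right

theorem inf_le_of_pairwise_adjacent_of_not_le_sup (ht : 0 < t) {τ₀ τ₁ τ' : Submodule F V}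
    (h₀ : τ₀ ∈ S) (h₁ : τ₁ ∈ S) (h₀₁ : τ₀ ≠ τ₁) (h' : τ' ∈ S) (h'M : ¬τ' ≤ τ₀ ⊔ τ₁)
    ⦃τ : Submodule F V⦄ (hτ : τ ∈ S) : τ₀ ⊓ τ₁ ≤ τ := by
  have key := le_sup_or_inf_le_of_pairwise_adjacent hdim hpair ht h₀ h₁ h₀₁
  refine (key hτ).elim (fun hτM => ?_) id
  have hW := hpair τ₀ h₀ τ₁ h₁ h₀₁
  have hτ'M : τ' ⊓ (τ₀ ⊔ τ₁) = τ₀ ⊓ τ₁ :=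
    inf_eq_of_not_le ((key h').resolve_left h'M) (inf_le_left.trans le_sup_left) h'M
      (by rw [hW, hdim τ' h']; omega)
  have hsub : τ ⊓ τ' ≤ τ₀ ⊓ τ₁ := hτ'M ▸ le_inf inf_le_right (inf_le_left.trans hτM)
  have hττ' := hpair τ hτ τ' h' fun h => h'M (h ▸ hτM)
  exact eq_of_le_of_finrank_eq hsub (by omega) ▸ inf_le_left

end PairwiseAdjacent

/-- Classical dichotomy: a family of t-dimensional subspaces pairwise intersecting in
dimension exactly t-1 either lies in a common (t+1)-dimensional subspace or has a common
(t-1)-dimensional subspace. -/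
theorem stmt_19 {t : ℕ} {F V : Type*} [Field F]
    [AddCommGroup V] [Module F V] [FiniteDimensional F V]
    (S : Set (Submodule F V)) (hS : S.Nonempty)
    (hdim : ∀ τ ∈ S, finrank F τ = t)
    (hpair : ∀ τ₁ ∈ S, ∀ τ₂ ∈ S, τ₁ ≠ τ₂ →
      finrank F (τ₁ ⊓ τ₂ : Submodule F V) = t - 1) :
    (∃ M : Submodule F V, finrank F M = t + 1 ∧ ∀ τ ∈ S, τ ≤ M) ∨
    (∃ W : Submodule F V, finrank F W = t - 1 ∧ ∀ τ ∈ S, W ≤ τ) := by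
  obtain ⟨τ₀, h₀⟩ := hS
  rcases Nat.eq_zero_or_pos t with rfl | ht
  · exact Or.inr ⟨⊥, finrank_bot F V, fun τ _ => bot_le⟩
  by_cases hsingle : ∀ τ ∈ S, τ = τ₀
  · obtain ⟨W, hWτ₀, hW⟩ := τ₀.exists_le_finrank_eq (n := t - 1) (by rw [hdim τ₀ h₀]; omega)
    exact Or.inr ⟨W, hW, fun τ hτ => hsingle τ hτ ▸ hWτ₀⟩
  push Not at hsingle
  obtain ⟨τ₁, h₁, h₁₀⟩ := hsingle
  have h₀₁ := h₁₀.symm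
  by_cases hM : ∀ τ ∈ S, τ ≤ τ₀ ⊔ τ₁
  · refine Or.inl ⟨τ₀ ⊔ τ₁, ?_, hM⟩
    have := finrank_sup_add_finrank_inf_eq τ₀ τ₁
    rw [hdim τ₀ h₀, hdim τ₁ h₁, hpair τ₀ h₀ τ₁ h₁ h₀₁] at this
    omega
  push Not at hM
  obtain ⟨τ', h', h'M⟩ := hM
  exact Or.inr ⟨τ₀ ⊓ τ₁, hpair τ₀ h₀ τ₁ h₁ h₀₁,
    inf_le_of_pairwise_adjacent_of_not_le_sup hdim hpair ht h₀ h₁ h₀₁ h' h'M⟩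
end
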